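/- Relational soundness of bind for faceted values: fix an observer label ℓ* : L, relations Aᵣ : A₀ → A₁ → Prop and Bᵣ : B₀ → B₁ → Prop, faceted values f₀ : Fac A₀ and f₁ : Fac A₁ with Aᵣ (project ℓ* f₀) (project ℓ* f₁), and continuations c₀ : A₀ → Fac B₀ and c₁ : A₁ → Fac B₁ such that for all a₀ : A₀ and a₁ : A₁ with Aᵣ a₀ a₁ one has Bᵣ (project ℓ* (c₀ a₀)) (project ℓ* (c₁ a₁)). Then Bᵣ (project ℓ* (bind f₀ c₀)) (project ℓ* (bind f₁ c₁)). -/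
import Mathlib


/-- Faceted values over labels `L` and payload type `A`. -/
inductive Fac (L : Type*) (A : Type*) where
  | ret : A → Fac L A
  | facet : L → Fac L A → Fac L A → Fac L A

section
variable {L : Type*} [PartialOrder L] [DecidableRel ((· ≤ ·) : L → L → Prop)]

/-- Projection of a faceted value at an observer level. -/
def Fac.project {A : Type*} (ℓ : L) : Fac L A → A
  | .ret a => a
  | .facet ℓ' f₀ f₁ => if ℓ' ≤ ℓ then f₀.project ℓ else f₁.project ℓ

/-- Monadic bind for faceted values. -/
def Fac.bind {A B : Type*} : Fac L A → (A → Fac L B) → Fac L B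
  | .ret a, c => c a
  | .facet ℓ' f₀ f₁, c => .facet ℓ' (f₀.bind c) (f₁.bind c)

/-- `ℓ`-equivalence of faceted values. -/
def FacEquiv {A : Type*} (ℓ : L) (f₀ f₁ : Fac L A) : Prop :=
  f₀.project ℓ = f₁.project ℓ


theorem project_bind {A B : Type*} (ℓ : L) (f : Fac L A) (c : A → Fac L B) :
    (f.bind c).project ℓ = (c (f.project ℓ)).project ℓ := by
  induction f with
  | ret a => rfl
  | facet ℓ' g₀ g₁ ih₀ ih₁ =>
    simp only [Fac.bind, Fac.project]
    split <;> simp [*]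

/-- Relational soundness of bind for faceted values. -/
theorem bind_rel {A₀ A₁ B₀ B₁ : Type*} (ℓstar : L)
    (Ar : A₀ → A₁ → Prop) (Br : B₀ → B₁ → Prop)
    (f₀ : Fac L A₀) (f₁ : Fac L A₁)
    (hf : Ar (f₀.project ℓstar) (f₁.project ℓstar))
    (c₀ : A₀ → Fac L B₀) (c₁ : A₁ → Fac L B₁)
    (hc : ∀ a₀ a₁, Ar a₀ a₁ → Br ((c₀ a₀).project ℓstar) ((c₁ a₁).project ℓstar)) :
    Br ((f₀.bind c₀).project ℓstar) ((f₁.bind c₁).project ℓstar) := by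
  rw [project_bind, project_bind]
  exact hc _ _ hf

end
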